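/- arXiv:1601.07466 — 2 statements merged into one kernel-verified Lean document; each statement's English description precedes it below -/
import Mathlib

section
/- Let f : P → ℂ be such that the function (λ,γ) ↦ f(λγ)·μ(λ)/n_λ on P×P is absolutely summable. Define f̃(λ) := ∑_{γ∈P} f(λγ). Then both series below converge absolutely and ∑_{λ∈P} f(λ)·φ(λ)/n_λ = ∑_{λ∈P} f̃(λ)·μ(λ)/n_λ. -/
/-- The set of partition divisors (sub-partitions) of `l`. -/
def pdivisors (l : Multiset ℕ+) : Finset (Multiset ℕ+) := l.powerset.toFinset

/-- Partition-theoretic Möbius function. -/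
def pmu (l : Multiset ℕ+) : ℂ := if l.Nodup then (-1 : ℂ) ^ (Multiset.card l) else 0

/-- The "integer" of a partition: the product of its parts. -/
def nInt (l : Multiset ℕ+) : ℕ := (l.map (fun a => (a : ℕ))).prod

/-- Partition-theoretic phi function. -/
noncomputable def pphi (l : Multiset ℕ+) : ℂ :=
  (nInt l : ℂ) * ∏ a ∈ l.toFinset, (1 - (a : ℂ)⁻¹)

/-- Convert a `Nat.Partition n` to a multiset of positive integers. -/
def toPtn {n : ℕ} (p : n.Partition) : Multiset ℕ+ :=
  p.parts.pmap (fun x hx => ⟨x, hx⟩) (fun _ hx => p.parts_pos hx)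

/-- The partition function `p(n)`. -/
def partcount (n : ℕ) : ℕ := Fintype.card (Nat.Partition n)

/-- A partition lies in `P₌` iff it is nonempty with all parts equal. -/
def isPeq (l : Multiset ℕ+) : Prop :=
  ∃ (a : ℕ+) (k : ℕ), 0 < k ∧ l = Multiset.replicate k a

/-!
Since `φ(λ)/n_λ = ∏_{a ∈ λ} (1 - a⁻¹) = ∑_{δ ≤ λ} μ(δ)/n_δ` (only multiplicity-free `δ`
contribute), the left-hand series is the sum of `f(δγ)·μ(δ)/n_δ` over `P × P` grouped along the
fibres of `(δ, γ) ↦ δγ`, which are the finite antidiagonals; the right-hand series is the same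
double series summed over `γ` first. Absolute summability justifies both regroupings.
-/

open Finset

instance Multiset.instHasAntidiagonal {α : Type*} [DecidableEq α] :
    HasAntidiagonal (Multiset α) where
  antidiagonal s := s.antidiagonal.toFinset
  mem_antidiagonal := by simp

section Antidiagonal

variable {α M : Type*} [DecidableEq α] [AddCommMonoid M]

theorem Multiset.sum_antidiagonal_fst (s : Multiset α) (F : Multiset α → M) :
    ∑ p ∈ HasAntidiagonal.antidiagonal s, F p.1 = ∑ t ∈ s.powerset.toFinset, F t := by
  rw [← Multiset.antidiagonal_map_fst, Multiset.toFinset_map]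
  refine (sum_image fun p hp q hq hpq => Prod.ext hpq ?_).symm
  have hp' : p.1 + p.2 = s := HasAntidiagonal.mem_antidiagonal.1 hp
  have hq' : q.1 + q.2 = s := HasAntidiagonal.mem_antidiagonal.1 hq
  exact add_left_cancel (hpq ▸ hp'.trans hq'.symm)

theorem Multiset.sum_powerset_toFinset_eq_sum_toFinset_powerset (s : Multiset α)
    {F : Multiset α → M} (hF : ∀ t, ¬t.Nodup → F t = 0) :
    ∑ t ∈ s.powerset.toFinset, F t = ∑ t ∈ s.toFinset.powerset, F t.val := by
  rw [← sum_image fun _ _ _ _ => Finset.val_inj.1]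
  refine (sum_subset (fun t ht => ?_) fun t ht hnot => hF t fun hnd => hnot ?_).symm
  · obtain ⟨u, hu, rfl⟩ := mem_image.1 ht
    exact Multiset.mem_toFinset.2 <| Multiset.mem_powerset.2 <|
      (Multiset.le_iff_subset u.nodup).2 fun a ha =>
        Multiset.mem_toFinset.1 (Finset.mem_powerset.1 hu ha)
  · refine mem_image.2 ⟨⟨t, hnd⟩, Finset.mem_powerset.2 fun a ha => ?_, rfl⟩
    exact Multiset.mem_toFinset.2 <|
      Multiset.mem_of_le (Multiset.mem_powerset.1 (Multiset.mem_toFinset.1 ht)) ha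

end Antidiagonal

theorem nInt_cast (l : Multiset ℕ+) :
    (nInt l : ℂ) = (l.map fun a : ℕ+ => ((a : ℕ) : ℂ)).prod := by
  simp [nInt, Nat.cast_multiset_prod, Multiset.map_map]

theorem nInt_cast_ne_zero (l : Multiset ℕ+) : (nInt l : ℂ) ≠ 0 := by
  rw [nInt_cast]
  exact Multiset.prod_ne_zero (by simp)

theorem pmu_div_nInt_val (t : Finset ℕ+) :
    pmu t.val / nInt t.val = ∏ a ∈ t, -(a : ℂ)⁻¹ := by
  rw [pmu, if_pos t.nodup, nInt_cast, ← Finset.prod_eq_multiset_prod, div_eq_mul_inv,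
    ← prod_inv_distrib, card_val, ← prod_const, ← prod_mul_distrib]
  exact prod_congr rfl fun a _ => neg_one_mul _

theorem sum_antidiagonal_pmu_div_nInt (l : Multiset ℕ+) :
    ∑ p ∈ antidiagonal l, pmu p.1 / nInt p.1 = pphi l / nInt l := by
  have hvanish : ∀ t : Multiset ℕ+, ¬t.Nodup → pmu t / nInt t = 0 := fun t ht => by
    simp [pmu, ht]
  rw [Multiset.sum_antidiagonal_fst l fun d => pmu d / nInt d,
    Multiset.sum_powerset_toFinset_eq_sum_toFinset_powerset l hvanish, pphi,
    mul_div_cancel_left₀ _ (nInt_cast_ne_zero l)]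
  simp_rw [pmu_div_nInt_val, sub_eq_add_neg, prod_one_add]

section Regrouping

variable {A β γ E : Type*}

theorem summable_norm_sum_antidiagonal [AddCommMonoid A] [HasAntidiagonal A]
    [SeminormedAddCommGroup E] {g : A × A → E} (hg : Summable fun p => ‖g p‖) :
    Summable fun n => ‖∑ p ∈ antidiagonal n, g p‖ := by
  have hσ : Summable fun x : Σ n : A, antidiagonal n => ‖g x.2‖ :=
    HasAntidiagonal.sigmaAntidiagonalEquivProd.summable_iff.2 hg
  refine Summable.of_nonneg_of_le (fun _ => norm_nonneg _) (fun n => norm_sum_le _ _) ?_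
  simpa only [Finset.tsum_subtype (f := fun p => ‖g p‖)] using hσ.sigma

theorem tsum_sum_antidiagonal [AddCommMonoid A] [HasAntidiagonal A] [AddCommMonoid E]
    [TopologicalSpace E] [ContinuousAdd E] [T3Space E] {g : A × A → E} (hg : Summable g) :
    ∑' n, ∑ p ∈ antidiagonal n, g p = ∑' p, g p := by
  let e := HasAntidiagonal.sigmaAntidiagonalEquivProd (A := A)
  have hσ : Summable fun c => g (e c) := e.summable_iff.2 hg
  rw [← e.tsum_eq, hσ.tsum_sigma' fun n => (hasSum_fintype _).summable]
  simp only [e, HasAntidiagonal.sigmaAntidiagonalEquivProd_apply, Finset.tsum_subtype (f := g)]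

theorem summable_norm_tsum_prod [SeminormedAddCommGroup E] {g : β × γ → E}
    (hg : Summable fun p => ‖g p‖) : Summable fun b => ‖∑' c, g (b, c)‖ :=
  Summable.of_nonneg_of_le (fun _ => norm_nonneg _)
    (fun b => norm_tsum_le_tsum_norm (hg.prod_factor b)) hg.prod

end Regrouping

/-- If `(λ,γ) ↦ f(λγ)·μ(λ)/n_λ` is absolutely summable on `P×P`, then with
`f̃(λ) := ∑_{γ∈P} f(λγ)`, both series converge absolutely and
`∑_{λ∈P} f(λ)φ(λ)/n_λ = ∑_{λ∈P} f̃(λ)μ(λ)/n_λ`. -/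
theorem pphi_pmu_series (f : Multiset ℕ+ → ℂ)
    (h : Summable (fun p : Multiset ℕ+ × Multiset ℕ+ =>
      ‖f (p.1 + p.2) * pmu p.1 / (nInt p.1 : ℂ)‖)) :
    Summable (fun l : Multiset ℕ+ => ‖f l * pphi l / (nInt l : ℂ)‖) ∧
    Summable (fun l : Multiset ℕ+ =>
      ‖(∑' g : Multiset ℕ+, f (l + g)) * pmu l / (nInt l : ℂ)‖) ∧
    (∑' l : Multiset ℕ+, f l * pphi l / (nInt l : ℂ))
      = ∑' l : Multiset ℕ+, (∑' g : Multiset ℕ+, f (l + g)) * pmu l / (nInt l : ℂ) := by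
  have hfibre : ∀ l, ∑ p ∈ antidiagonal l, f (p.1 + p.2) * pmu p.1 / nInt p.1
      = f l * pphi l / nInt l := fun l => calc
    _ = ∑ p ∈ antidiagonal l, f l * (pmu p.1 / nInt p.1) :=
      sum_congr rfl fun p hp => by rw [mem_antidiagonal.1 hp, mul_div_assoc]
    _ = f l * pphi l / nInt l := by rw [← mul_sum, sum_antidiagonal_pmu_div_nInt, mul_div_assoc]
  have hrow : ∀ l, ∑' γ, f (l + γ) * pmu l / nInt l = (∑' γ, f (l + γ)) * pmu l / nInt l :=
    fun l => by rw [tsum_div_const, tsum_mul_right]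
  refine ⟨?_, ?_, ?_⟩
  · simpa only [hfibre] using summable_norm_sum_antidiagonal h
  · simpa only [hrow] using summable_norm_tsum_prod h
  · have hg := h.of_norm
    rw [← funext hfibre, tsum_sum_antidiagonal hg, hg.tsum_prod]
    exact tsum_congr hrow
end

section
/- Let f : P → ℂ be arbitrary and define F(λ) := ∑_{δ|λ} f(δ). Then the q-bracket of F equals the partition power series of f: for every integer n ≥ 0, ∑_{λ⊢n} F(λ) = ∑_{k=0}^{n} (∑_{δ⊢k} f(δ)) · p(n−k); equivalently, as formal power series, ∑_{λ∈P} F(λ) q^{|λ|} = (∑_{λ∈P} f(λ) q^{|λ|}) · (∑_{λ∈P} q^{|λ|}), i.e., ⟨F⟩_q = ∑_{λ∈P} f(λ) q^{|λ|}. -/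
open Finset

def ptnSize (l : Multiset ℕ+) : ℕ := (l.map ((↑) : ℕ+ → ℕ)).sum

def ptnsOfSize (n : ℕ) : Finset (Multiset ℕ+) := univ.image (toPtn (n := n))

lemma ptnSize_add (a b : Multiset ℕ+) : ptnSize (a + b) = ptnSize a + ptnSize b := by
  simp [ptnSize]

lemma ptnSize_mono {a b : Multiset ℕ+} (h : a ≤ b) : ptnSize a ≤ ptnSize b := by
  rw [← add_tsub_cancel_of_le h, ptnSize_add]
  exact Nat.le_add_right _ _

lemma map_coe_toPtn {n : ℕ} (p : n.Partition) : (toPtn p).map ((↑) : ℕ+ → ℕ) = p.parts :=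
  (Multiset.map_pmap _ _ _ _).trans ((Multiset.pmap_eq_map _ _ _ _).trans (Multiset.map_id _))

lemma toPtn_injective {n : ℕ} : Function.Injective (toPtn (n := n)) := fun p q h =>
  Nat.Partition.ext <| by rw [← map_coe_toPtn, ← map_coe_toPtn, h]

lemma mem_ptnsOfSize {n : ℕ} {l : Multiset ℕ+} : l ∈ ptnsOfSize n ↔ ptnSize l = n := by
  simp only [ptnsOfSize, mem_image, mem_univ, true_and]
  constructor
  · rintro ⟨p, rfl⟩
    rw [ptnSize, map_coe_toPtn, p.parts_sum]
  · intro hl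
    refine ⟨⟨l.map ((↑) : ℕ+ → ℕ), by simp, hl⟩, ?_⟩
    exact Multiset.map_injective PNat.coe_injective (map_coe_toPtn _)

lemma card_ptnsOfSize (n : ℕ) : #(ptnsOfSize n) = partcount n := by
  rw [ptnsOfSize, card_image_of_injective _ toPtn_injective, card_univ, partcount]

lemma sum_partition_eq_sum_ptnsOfSize {M : Type*} [AddCommMonoid M] (n : ℕ)
    (g : Multiset ℕ+ → M) : ∑ p : n.Partition, g (toPtn p) = ∑ l ∈ ptnsOfSize n, g l :=
  (sum_image fun _ _ _ _ h => toPtn_injective h).symm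

lemma mem_pdivisors {l δ : Multiset ℕ+} : δ ∈ pdivisors l ↔ δ ≤ l := by
  rw [pdivisors, Multiset.mem_toFinset, Multiset.mem_powerset]

lemma card_filter_le_ptnsOfSize {δ : Multiset ℕ+} {n : ℕ} (hδ : ptnSize δ ≤ n) :
    #{l ∈ ptnsOfSize n | δ ≤ l} = partcount (n - ptnSize δ) := by
  rw [← card_ptnsOfSize]
  refine card_nbij' (· - δ) (δ + ·) ?_ ?_ ?_ ?_
  · intro l hl
    simp only [coe_filter, Set.mem_ofPred_eq, mem_coe, mem_ptnsOfSize] at hl ⊢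
    rw [← hl.1, ← add_tsub_cancel_of_le hl.2, ptnSize_add, add_tsub_cancel_left,
      add_tsub_cancel_left]
  · intro μ hμ
    simp only [coe_filter, Set.mem_ofPred_eq, mem_ptnsOfSize, mem_coe] at hμ ⊢
    exact ⟨by rw [ptnSize_add, hμ]; omega, Multiset.le_add_right _ _⟩
  · intro l hl
    simp only [coe_filter, Set.mem_ofPred_eq] at hl
    exact add_tsub_cancel_of_le hl.2
  · intro μ _
    exact add_tsub_cancel_left _ _

lemma pairwiseDisjoint_ptnsOfSize (s : Set ℕ) : s.PairwiseDisjoint ptnsOfSize :=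
  fun _ _ _ _ hij => disjoint_left.2 fun _ hi hj =>
    hij ((mem_ptnsOfSize.1 hi).symm.trans (mem_ptnsOfSize.1 hj))

lemma sum_ptnsOfSize_sum_pdivisors {M : Type*} [AddCommMonoid M] (f : Multiset ℕ+ → M)
    (n : ℕ) : ∑ l ∈ ptnsOfSize n, ∑ δ ∈ pdivisors l, f δ
      = ∑ k ∈ range (n + 1), partcount (n - k) • ∑ δ ∈ ptnsOfSize k, f δ := by
  have swap : ∑ l ∈ ptnsOfSize n, ∑ δ ∈ pdivisors l, f δ
      = ∑ δ ∈ (range (n + 1)).biUnion ptnsOfSize,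
          ∑ l ∈ ptnsOfSize n with δ ≤ l, f δ := by
    refine sum_comm' fun l δ => ?_
    simp only [mem_pdivisors, mem_filter, mem_biUnion, mem_range, mem_ptnsOfSize,
      exists_eq_right']
    constructor
    · rintro ⟨hl, hδ⟩
      exact ⟨⟨hl, hδ⟩, by have := ptnSize_mono hδ; omega⟩
    · exact fun h => h.1
  rw [swap, sum_biUnion (pairwiseDisjoint_ptnsOfSize _)]
  refine sum_congr rfl fun k hk => ?_
  rw [smul_sum]
  refine sum_congr rfl fun δ hδ => ?_
  rw [mem_ptnsOfSize] at hδ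
  rw [sum_const, card_filter_le_ptnsOfSize (hδ ▸ Nat.lt_succ_iff.1 (mem_range.1 hk)), hδ]

/-- If `F(λ) = ∑_{δ|λ} f(δ)`, then `⟨F⟩_q = ∑_{λ∈P} f(λ) q^{|λ|}`: in graded form, for
every `n ≥ 0`, `∑_{λ⊢n} F(λ) = ∑_{k=0}^{n} (∑_{δ⊢k} f(δ))·p(n−k)`. -/
theorem qbracket_of_divisor_sum (f F : Multiset ℕ+ → ℂ)
    (hF : ∀ l : Multiset ℕ+, F l = ∑ δ ∈ pdivisors l, f δ) (n : ℕ) :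
    (∑ p : n.Partition, F (toPtn p))
      = ∑ k ∈ Finset.range (n + 1),
          (∑ d : k.Partition, f (toPtn d)) * (partcount (n - k) : ℂ) := by
  rw [sum_partition_eq_sum_ptnsOfSize n F]
  simp only [hF, sum_ptnsOfSize_sum_pdivisors, sum_partition_eq_sum_ptnsOfSize _ f, nsmul_eq_mul,
    mul_comm]
end
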